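/- Let G be a graph obtained from H_{n,k,δ} = K_δ ∨ (K_{n-2δ+k} ∪ I_{δ-k}) by deleting a set E' of at most ⌊δ(δ-k)/4⌋ edges whose endpoints both lie in the set of vertices of degree n-1 or n-δ+k-1. Then the largest signless Laplacian eigenvalue satisfies q(G) ≥ 2(n - δ + k - 1). -/

import Mathlib

open SimpleGraph

/-- `K_δ ∨ (K_{n-2δ+k} ∪ I_{δ-k})` on `Fin n`: vertices `< d` form the dominating
clique `K_d`, vertices in `[d, n-d+k)` form the clique, the rest are independent. -/
def Hgraph (n k d : ℕ) : SimpleGraph (Fin n) where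
  Adj u v := u ≠ v ∧ ((u : ℕ) < d ∨ (v : ℕ) < d ∨ ((u : ℕ) < n - d + k ∧ (v : ℕ) < n - d + k))
  symm := by constructor; intro u v h; exact ⟨h.1.symm, by tauto⟩
  loopless := by constructor; intro u h; exact h.1 rfl

/-- `K_{k+1} ∨ (K_{n-d-1} ∪ K_{d-k})` on `Fin n`: vertices `< k+1` form the dominating
clique, `[k+1, n-d+k)` forms `K_{n-d-1}`, `[n-d+k, n)` forms `K_{d-k}`. -/
def Lgraph (n k d : ℕ) : SimpleGraph (Fin n) where
  Adj u v := u ≠ v ∧ ((u : ℕ) < k + 1 ∨ (v : ℕ) < k + 1 ∨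
    ((u : ℕ) < n - d + k ∧ (v : ℕ) < n - d + k) ∨
    (n - d + k ≤ (u : ℕ) ∧ n - d + k ≤ (v : ℕ)))
  symm := by constructor; intro u v h; exact ⟨h.1.symm, by tauto⟩
  loopless := by constructor; intro u h; exact h.1 rfl

/-- `K_m ∪ I_{n-m}` on `Fin n`: vertices `< m` form a clique, the rest are isolated. -/
def KIgraph (n m : ℕ) : SimpleGraph (Fin n) where
  Adj u v := u ≠ v ∧ (u : ℕ) < m ∧ (v : ℕ) < m
  symm := by constructor; intro u v h; exact ⟨h.1.symm, h.2.2, h.2.1⟩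
  loopless := by constructor; intro u h; exact h.1 rfl

/-- Degree of a vertex, as the cardinality of its neighbour set. -/
noncomputable def deg {V : Type*} (G : SimpleGraph V) (v : V) : ℕ := (G.neighborSet v).ncard

/-- Number of edges of a graph. -/
noncomputable def eCount {V : Type*} (G : SimpleGraph V) : ℕ := G.edgeSet.ncard

open scoped Classical in
/-- Adjacency matrix over `ℝ`. -/
noncomputable def adjMat {V : Type*} [Fintype V] (G : SimpleGraph V) : Matrix V V ℝ :=
  fun u v => if G.Adj u v then 1 else 0

open scoped Classical in
/-- Signless Laplacian matrix `Q(G) = D(G) + A(G)` over `ℝ`. -/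
noncomputable def sLap {V : Type*} [Fintype V] (G : SimpleGraph V) : Matrix V V ℝ :=
  fun u v => (if u = v then (deg G u : ℝ) else 0) + (if G.Adj u v then 1 else 0)

/-- The largest (real) eigenvalue of a matrix. -/
noncomputable def maxEig {V : Type*} [Fintype V] (A : Matrix V V ℝ) : ℝ :=
  sSup {μ : ℝ | ∃ x : V → ℝ, x ≠ 0 ∧ A.mulVec x = μ • x}

/-- A graph is `k`-Hamiltonian if deleting any set of at most `k` vertices
leaves a Hamiltonian graph. -/
def IsKHamiltonian {n : ℕ} (G : SimpleGraph (Fin n)) (k : ℕ) : Prop :=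
  ∀ S : Finset (Fin n), S.card ≤ k →
    (G.induce ((↑(Sᶜ) : Set (Fin n)))).IsHamiltonian

/-- A graph is `k`-edge-Hamiltonian if every linear forest with at most `k` edges
(a set of edges forming vertex-disjoint paths) is contained in a Hamiltonian cycle. -/
def IsKEdgeHamiltonian {n : ℕ} (G : SimpleGraph (Fin n)) (k : ℕ) : Prop :=
  ∀ F : Set (Sym2 (Fin n)), F ⊆ G.edgeSet → F.ncard ≤ k →
    (SimpleGraph.fromEdgeSet F).IsAcyclic →
    (∀ v, ((SimpleGraph.fromEdgeSet F).neighborSet v).ncard ≤ 2) →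
    ∃ (a : Fin n) (p : G.Walk a a), p.IsHamiltonianCycle ∧ ∀ e ∈ F, e ∈ p.edges

/-- The `s`-closure of a graph: the smallest supergraph in which any two distinct
non-adjacent vertices have degree sum less than `s`. -/
noncomputable def closureGraph {V : Type*} (G : SimpleGraph V) (s : ℕ) : SimpleGraph V :=
  sInf {H | G ≤ H ∧ ∀ u v, u ≠ v → s ≤ deg H u + deg H v → H.Adj u v}

/-!
Test the Rayleigh quotient of `Q(G)` at the indicator vector `x` of `Y ∪ Z`, a set of
`m = n - δ + k` vertices. As `xᵀQx = ∑_{uv ∈ E} (x_u + x_v)²`, each edge inside `Y ∪ Z`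
contributes `4` and each edge between `Y` and `I_{δ-k}` contributes `1`, so for `H_{n,k,δ}`
we get `xᵀQx = 2m(m-1) + δ(δ-k)`. The deleted edges lie inside `Y ∪ Z` and cost
`4|E'| ≤ δ(δ-k)`, hence `xᵀQx ≥ 2(m-1) xᵀx` for `G`, and `q(G)` is at least this Rayleigh
quotient.
-/

open Finset SimpleGraph Matrix

lemma re_inner_toEuclideanLin_div_norm_sq {ι : Type*} [Fintype ι] [DecidableEq ι]
    (Q : Matrix ι ι ℝ) (x : ι → ℝ) :
    RCLike.re (inner ℝ (toEuclideanLin Q (WithLp.toLp 2 x)) (WithLp.toLp 2 x)) /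
      ‖WithLp.toLp 2 x‖ ^ 2 = (x ⬝ᵥ Q *ᵥ x) / (x ⬝ᵥ x) := by
  rw [← real_inner_self_eq_norm_sq]
  simp only [EuclideanSpace.inner_eq_star_dotProduct, RCLike.re_to_real, star_trivial]
  rfl

/- The supremum of the Rayleigh quotient is itself an eigenvalue, and every eigenvalue is the
Rayleigh quotient of its eigenvectors, so `maxEig Q` is that supremum. -/
theorem dotProduct_mulVec_div_le_maxEig {ι : Type*} [Fintype ι] {Q : Matrix ι ι ℝ}
    (hQ : Q.IsHermitian) {x : ι → ℝ} (hx : x ≠ 0) :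
    (x ⬝ᵥ Q *ᵥ x) / (x ⬝ᵥ x) ≤ maxEig Q := by
  classical
  have : Nontrivial (EuclideanSpace ℝ ι) := ⟨⟨WithLp.toLp 2 x, 0, by simpa using hx⟩⟩
  set T := toEuclideanLin Q
  set μ := ⨆ y : {y : EuclideanSpace ℝ ι // y ≠ 0},
    RCLike.re (inner ℝ (T y) y) / ‖(y : EuclideanSpace ℝ ι)‖ ^ 2
  have hbdd : BddAbove (Set.range fun y : {y : EuclideanSpace ℝ ι // y ≠ 0} =>
      RCLike.re (inner ℝ (T y) y) / ‖(y : EuclideanSpace ℝ ι)‖ ^ 2) := by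
    refine ⟨‖LinearMap.toContinuousLinearMap T‖, ?_⟩
    rintro _ ⟨y, rfl⟩
    exact (le_abs_self _).trans
      ((LinearMap.toContinuousLinearMap T).rayleighQuotient_le_norm (y : EuclideanSpace ℝ ι))
  have hle (y : ι → ℝ) (hy : y ≠ 0) : (y ⬝ᵥ Q *ᵥ y) / (y ⬝ᵥ y) ≤ μ := by
    rw [← re_inner_toEuclideanLin_div_norm_sq]
    exact le_ciSup hbdd ⟨WithLp.toLp 2 y, by simpa using hy⟩
  have hgreatest :
      IsGreatest {ν : ℝ | ∃ x : ι → ℝ, x ≠ 0 ∧ Q.mulVec x = ν • x} μ := by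
    constructor
    · obtain ⟨v, hv⟩ := (isSymmetric_toEuclideanLin_iff.mpr hQ
        |>.hasEigenvalue_iSup_of_finiteDimensional).exists_hasEigenvector
      exact ⟨WithLp.ofLp v, by simpa using hv.2, congrArg WithLp.ofLp hv.apply_eq_smul⟩
    · rintro ν ⟨y, hy, hQy⟩
      have hyy : y ⬝ᵥ y ≠ 0 := fun h => hy (dotProduct_self_eq_zero.mp h)
      simpa [hQy, hyy] using hle y hy
  rw [maxEig, hgreatest.csSup_eq]
  exact hle x hx

theorem le_maxEig_of_mul_dotProduct_le {ι : Type*} [Fintype ι] {Q : Matrix ι ι ℝ}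
    (hQ : Q.IsHermitian) {x : ι → ℝ} (hx : 0 < x ⬝ᵥ x) {c : ℝ}
    (h : c * (x ⬝ᵥ x) ≤ x ⬝ᵥ Q *ᵥ x) : c ≤ maxEig Q :=
  ((le_div_iff₀ hx).mpr h).trans <|
    dotProduct_mulVec_div_le_maxEig hQ fun h0 => by simp [h0] at hx

section SignlessLaplacian

variable {V : Type*}

lemma deg_eq_degree (G : SimpleGraph V) (v : V) [Fintype (G.neighborSet v)] :
    deg G v = G.degree v := by
  rw [deg, Set.ncard_eq_toFinset_card', ← card_neighborFinset_eq_degree, neighborFinset]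

lemma eCount_eq_card_edgeFinset (G : SimpleGraph V) [Fintype G.edgeSet] :
    eCount G = #G.edgeFinset := by
  rw [eCount, Set.ncard_eq_toFinset_card', edgeFinset]

lemma eCount_fromEdgeSet_le (s : Finset (Sym2 V)) :
    eCount (fromEdgeSet (s : Set (Sym2 V))) ≤ #s := by
  rw [eCount, edgeSet_fromEdgeSet, ← Set.ncard_coe_finset]
  exact Set.ncard_le_ncard Set.sdiff_subset s.finite_toSet

variable [Fintype V]

lemma indicator_dotProduct_indicator (A : Finset V) :
    Set.indicator (↑A) 1 ⬝ᵥ Set.indicator (↑A) (1 : V → ℝ) = #A := by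
  classical
  simp [dotProduct, Set.indicator_apply]

lemma sLap_eq_degMatrix_add_adjMatrix [DecidableEq V] (G : SimpleGraph V) [DecidableRel G.Adj] :
    sLap G = G.degMatrix ℝ + G.adjMatrix ℝ := by
  ext u v
  simp [sLap, degMatrix, diagonal_apply, deg_eq_degree]

lemma isHermitian_sLap (G : SimpleGraph V) : (sLap G).IsHermitian := by
  classical
  rw [sLap_eq_degMatrix_add_adjMatrix]
  exact (G.isHermitian_degMatrix ℝ).add (G.isHermitian_adjMatrix ℝ)

lemma sLap_sup {G H : SimpleGraph V} (h : Disjoint G H) :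
    sLap (G ⊔ H) = sLap G + sLap H := by
  have hdeg (u : V) : deg (G ⊔ H) u = deg G u + deg H u :=
    Set.ncard_union_eq (disjoint_neighborSet.mpr h u)
  ext u v
  have hGH : ¬ (G.Adj u v ∧ H.Adj u v) := fun ⟨hG, hH⟩ =>
    (disjoint_edgeSet.mpr h).notMem_of_mem_left (a := s(u, v)) hG hH
  rcases eq_or_ne u v with rfl | huv
  · simp [sLap, hdeg]
  · by_cases hG : G.Adj u v <;> by_cases hH : H.Adj u v <;> simp_all [sLap]

lemma sLap_deleteEdges_add_sLap_fromEdgeSet {G : SimpleGraph V} {s : Set (Sym2 V)}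
    (hs : s ⊆ G.edgeSet) :
    sLap (G.deleteEdges s) + sLap (fromEdgeSet s) = sLap G := by
  rw [deleteEdges, ← sLap_sup disjoint_sdiff_self_left,
    sdiff_sup_cancel ((G.fromEdgeSet_le).mpr (Set.sdiff_subset.trans hs))]

/- For the indicator vector of `A`, the quadratic form `∑_{uv ∈ E} (x_u + x_v)²` counts each
edge inside `A` four times and each edge leaving `A` once. -/
lemma indicator_dotProduct_sLap_mulVec [DecidableEq V] (G : SimpleGraph V) [DecidableRel G.Adj]
    (A : Finset V) :
    Set.indicator (↑A) 1 ⬝ᵥ sLap G *ᵥ Set.indicator (↑A) 1 =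
      ↑(∑ u ∈ A, (2 * #(G.neighborFinset u ∩ A) + #(G.neighborFinset u \ A))) := by
  have hsum (s : Finset V) : ∑ v ∈ s, Set.indicator (↑A) (1 : V → ℝ) v = #(s ∩ A) := by
    simp [Set.indicator_apply]
  have hdeg (u : V) :
      (G.degree u : ℝ) = #(G.neighborFinset u ∩ A) + #(G.neighborFinset u \ A) := by
    exact_mod_cast (card_inter_add_card_sdiff _ A).symm
  rw [sLap_eq_degMatrix_add_adjMatrix, add_mulVec, dotProduct_add, dotProduct_mulVec_degMatrix]
  simp only [dotProduct, adjMatrix_mulVec_apply, hsum]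
  simp [Set.indicator_apply, hdeg, sum_add_distrib, ← mul_sum]
  ring

lemma indicator_dotProduct_sLap_mulVec_of_adj_mem [DecidableEq V] (G : SimpleGraph V)
    [DecidableRel G.Adj] {A : Finset V} (hA : ∀ u v, G.Adj u v → u ∈ A) :
    Set.indicator (↑A) 1 ⬝ᵥ sLap G *ᵥ Set.indicator (↑A) 1 = 4 * eCount G := by
  have hN (u : V) : G.neighborFinset u ⊆ A := fun v hv =>
    hA v u ((mem_neighborFinset ..).mp hv).symm
  have hdeg (u : V) (hu : u ∉ A) : G.degree u = 0 :=
    card_eq_zero.mpr <| eq_empty_of_forall_notMem fun v hv =>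
      hu (hA u v ((mem_neighborFinset ..).mp hv))
  simp only [indicator_dotProduct_sLap_mulVec, inter_eq_left.mpr (hN _),
    sdiff_eq_empty_iff_subset.mpr (hN _), card_empty, add_zero, card_neighborFinset_eq_degree,
    ← mul_sum, sum_subset (subset_univ A) (fun u _ hu => hdeg u hu),
    sum_degrees_eq_twice_card_edges, eCount_eq_card_edgeFinset]
  push_cast
  ring

end SignlessLaplacian

/-- The set `Y ∪ Z` of `H_{n,k,δ}`; it spans the clique `K_δ ∨ K_{n-2δ+k}`. -/
def Hgraph.clique (n k d : ℕ) : Finset (Fin n) := {v | (v : ℕ) < n - d + k}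

lemma Hgraph.card_clique {n k d : ℕ} (hkd : k ≤ d) (hdn : d ≤ n) :
    #(Hgraph.clique n k d) = n - d + k := by
  simp [Hgraph.clique, Fin.card_filter_val_lt]
  omega

lemma Hgraph.indicator_clique_dotProduct_sLap_mulVec {n k d : ℕ} (hkd : k ≤ d)
    (hdn : 2 * d ≤ n + k) :
    Set.indicator ↑(Hgraph.clique n k d) 1 ⬝ᵥ sLap (Hgraph n k d) *ᵥ
      Set.indicator ↑(Hgraph.clique n k d) 1 =
      ((2 * (n - d + k) * (n - d + k - 1) + d * (d - k) : ℕ) : ℝ) := by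
  classical
  set C := Hgraph.clique n k d
  have hmem (v : Fin n) : v ∈ C ↔ (v : ℕ) < n - d + k := by simp [C, Hgraph.clique]
  have hinter (u) (hu : u ∈ C) : (Hgraph n k d).neighborFinset u ∩ C = C.erase u := by
    ext v
    simp only [mem_inter, mem_neighborFinset, mem_erase, hmem] at hu ⊢
    simp only [Hgraph]
    omega
  have hsdiff (u) (hu : u ∈ C) :
      (Hgraph n k d).neighborFinset u \ C = if (u : ℕ) < d then Cᶜ else ∅ := by
    ext v
    simp only [mem_sdiff, mem_neighborFinset, hmem] at hu ⊢
    split_ifs <;> simp [Hgraph, hmem] <;> omega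
  have hC : #C = n - d + k := Hgraph.card_clique hkd (by omega)
  have hCc : #Cᶜ = d - k := by rw [card_compl, Fintype.card_fin, hC]; omega
  have hCd : #(C.filter fun u : Fin n => (u : ℕ) < d) = d := by
    have : (C.filter fun u : Fin n => (u : ℕ) < d) =
        ({u : Fin n | (u : ℕ) < d} : Finset (Fin n)) := by
      ext u; simp only [mem_filter, hmem, mem_univ, true_and]; omega
    rw [this, Fin.card_filter_val_lt]; omega
  rw [indicator_dotProduct_sLap_mulVec]
  congr 1
  rw [sum_congr rfl fun u hu => by rw [hinter u hu, hsdiff u hu]]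
  simp only [apply_ite card, sum_add_distrib, sum_ite, card_empty, hCc, sum_const,
    sum_congr rfl fun u hu => congrArg (2 * ·) (card_erase_of_mem hu), hC, hCd, smul_eq_mul,
    mul_zero, add_zero]
  ring

lemma Hgraph.indicator_clique_dotProduct_sLap_deleteEdges_mulVec {n k d : ℕ} (hkd : k ≤ d)
    (hdn : 2 * d ≤ n + k) {E' : Finset (Sym2 (Fin n))} (hsub : ↑E' ⊆ (Hgraph n k d).edgeSet)
    (hin : ∀ e ∈ E', ∀ v ∈ e, (v : ℕ) < n - d + k) :
    Set.indicator ↑(Hgraph.clique n k d) 1 ⬝ᵥ sLap ((Hgraph n k d).deleteEdges ↑E') *ᵥ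
      Set.indicator ↑(Hgraph.clique n k d) 1 =
      ((2 * (n - d + k) * (n - d + k - 1) + d * (d - k) : ℕ) : ℝ) -
        4 * eCount (fromEdgeSet (E' : Set (Sym2 (Fin n)))) := by
  classical
  have hF (u v) (h : (fromEdgeSet (E' : Set (Sym2 (Fin n)))).Adj u v) :
      u ∈ Hgraph.clique n k d := by
    simpa [Hgraph.clique] using hin _ ((fromEdgeSet_adj _).mp h).1 u (Sym2.mem_mk_left u v)
  rw [← Hgraph.indicator_clique_dotProduct_sLap_mulVec hkd hdn,
    ← indicator_dotProduct_sLap_mulVec_of_adj_mem _ hF,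
    ← sLap_deleteEdges_add_sLap_fromEdgeSet hsub, add_mulVec, dotProduct_add,
    add_sub_cancel_right]

/-- Deleting at most `⌊δ(δ-k)/4⌋` edges with both endpoints of degree `n-1` or
`n-δ+k-1` from `H_{n,k,δ}` keeps the signless Laplacian spectral radius at least
`2(n-δ+k-1)`. -/
theorem stmt_8 (n k d : ℕ) (hd : k + 2 ≤ d) (hn : 2 * d - k + 1 ≤ n)
    (E' : Finset (Sym2 (Fin n))) (hsub : ↑E' ⊆ (Hgraph n k d).edgeSet)
    (hYZ : ∀ e ∈ E', ∀ v ∈ e, (v : ℕ) < n - d + k)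
    (hcard : E'.card ≤ d * (d - k) / 4) :
    2 * ((n : ℝ) - d + k - 1) ≤ maxEig (sLap ((Hgraph n k d).deleteEdges ↑E')) := by
  have hE : 4 * eCount (fromEdgeSet (E' : Set (Sym2 (Fin n)))) ≤ d * (d - k) := by
    have := eCount_fromEdgeSet_le E'
    have := Nat.div_mul_le_self (d * (d - k)) 4
    omega
  have hE' : (4 * eCount (fromEdgeSet (E' : Set (Sym2 (Fin n)))) : ℝ) ≤
      ((d * (d - k) : ℕ) : ℝ) := by
    exact_mod_cast hE
  refine le_maxEig_of_mul_dotProduct_le (isHermitian_sLap _)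
    (x := Set.indicator ↑(Hgraph.clique n k d) 1) ?_ ?_
  · rw [indicator_dotProduct_indicator, Hgraph.card_clique (by omega) (by omega)]
    exact Nat.cast_pos.mpr (by omega)
  · rw [indicator_dotProduct_indicator, Hgraph.card_clique (by omega) (by omega),
      Hgraph.indicator_clique_dotProduct_sLap_deleteEdges_mulVec (by omega) (by omega) hsub hYZ]
    push_cast [Nat.cast_sub (by omega : d ≤ n), Nat.cast_sub (by omega : k ≤ d),
      Nat.cast_sub (by omega : 1 ≤ n - d + k)] at hE' ⊢
    linarith
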